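/- For every α ∈ (0,1) and every x > 0, the profile function Φ satisfies the integral identity Φ(x) = 1 − (1/(Γ(α)(1+α))) ∫_0^x s·Φ(s)·(x−s)^{α−1} ds, and consequently Φ(x) ≥ 0 and ∫_0^x s·Φ(s)·(x−s)^{α−1} ds ≤ Γ(α)(1+α). -/

import Mathlib

open Real MeasureTheory Set Filter Topology

noncomputable def bCoef (α : ℝ) (n : ℕ) : ℝ :=
  ∏ i ∈ Finset.range n, Real.Gamma (α * i + i + 2) / Real.Gamma (α * (i + 1) + i + 2)

/-- The profile function `Φ(x) = ∑ bₙ (−x^{1+α}/(1+α))ⁿ`. -/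
noncomputable def Phi (α : ℝ) (x : ℝ) : ℝ :=
  ∑' n : ℕ, bCoef α n * (-(x ^ (1 + α)) / (1 + α)) ^ n

/-- The Caputo fractional derivative of order `α`. -/
noncomputable def caputo (α : ℝ) (f : ℝ → ℝ) (x : ℝ) : ℝ :=
  (1 / Real.Gamma (1 - α)) * ∫ τ in (0:ℝ)..x, deriv f τ * (x - τ) ^ (-α)

/-- The normalizing constant `a₀` with `1/a₀ = 2∫₀^∞ Φ`. -/
noncomputable def a0 (α : ℝ) : ℝ := (2 * ∫ x in Set.Ioi (0:ℝ), Phi α x)⁻¹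

/-- The fundamental solution `𝔈_t(x) = a₀ t^{−1/(1+α)} Φ(|x| t^{−1/(1+α)})`. -/
noncomputable def fundSol (α t x : ℝ) : ℝ :=
  a0 α * t ^ (-1/(1+α)) * Phi α (|x| * t ^ (-1/(1+α)))

noncomputable def C1 (α : ℝ) : ℝ :=
  α * (2:ℝ) ^ (1+α) * max (∫ u in (1/2:ℝ)..1, u ^ (-(1+α)) * (1-u) ^ (α-1)) 2

noncomputable def C2 (α : ℝ) : ℝ := 2 * a0 α * C1 α

/-!
Write `Φ = ∑ φₙ` with `φₙ(s) = bₙ (-s^(1+α)/(1+α))ⁿ`. The Beta integral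
`∫₀ˣ s^((1+α)n+1) (x-s)^(α-1) ds = x^((1+α)(n+1)) Γ((1+α)n+2) Γ(α) / Γ((1+α)n+2+α)`
gives `∫₀ˣ s φₙ(s) (x-s)^(α-1) ds = -Γ(α)(1+α) φₙ₊₁(x)`: the coefficients `bₙ` are built for exactly
this recursion. Log-convexity of `Γ` bounds `bₙ₊₁/bₙ` by `(n+1)^(-α)`, so the series is entire; its
terms have constant sign on `[0, ∞)`, so it may be integrated termwise, and summing gives the identity.

For positivity, suppose `Φ ≥ 0` on `[0, y]`, let `-M < 0` be the minimum of `Φ` on `[y, y+δ]`,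
attained at `x₀`, and `T` the last point of `[y, x₀]` with `Φ(T) ≥ 0`. For `α ≤ 1` the kernel
`(x-s)^(α-1)` decreases in `x`, so comparing the identity at `x₀` with the one at `T` leaves only
the negative part of `Φ` on `[y, T]`: `Γ(α)(1+α) M ≤ (y+δ) M δ^α / α`, impossible for small `δ`.
Positivity then spreads over `[0, ∞)` by real induction, and the identity gives the integral bound.
-/

lemma bCoef_pos {α : ℝ} (hα : 0 ≤ α) (n : ℕ) : 0 < bCoef α n :=
  Finset.prod_pos fun _ _ ↦ div_pos (Gamma_pos_of_pos (by positivity))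
    (Gamma_pos_of_pos (by positivity))

lemma bCoef_succ (α : ℝ) (n : ℕ) :
    bCoef α (n + 1) = bCoef α n * (Gamma ((1 + α) * n + 2) / Gamma ((1 + α) * n + 2 + α)) := by
  rw [bCoef, bCoef, Finset.prod_range_succ]
  congr 3 <;> ring

lemma Gamma_le_Gamma_add_mul_rpow_neg {α y : ℝ} (hα : α ∈ Ioo 0 1) (hy : 0 < y - 1 + α) :
    Gamma y ≤ Gamma (y + α) * (y - 1 + α) ^ (-α) := by
  have hΓ : 0 < Gamma (y - 1 + α) := Gamma_pos_of_pos hy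
  have hrec : Gamma (y + α) = (y - 1 + α) * Gamma (y - 1 + α) := by
    rw [← Gamma_add_one hy.ne']; ring_nf
  calc Gamma y = Gamma ((1 - α) * (y + α) + α * (y - 1 + α)) := by ring_nf
    _ ≤ Gamma (y + α) ^ (1 - α) * Gamma (y - 1 + α) ^ α :=
      Gamma_mul_add_mul_le_rpow_Gamma_mul_rpow_Gamma (by linarith) hy (by linarith [hα.2]) hα.1
        (by ring)
    _ = Gamma (y + α) * (y - 1 + α) ^ (-α) := by
      rw [hrec, mul_rpow hy.le hΓ.le, mul_assoc, ← rpow_add hΓ, sub_add_cancel, rpow_one,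
        rpow_sub hy, rpow_one, rpow_neg hy.le]
      ring

lemma bCoef_succ_div_le {α : ℝ} (hα : α ∈ Ioo 0 1) (n : ℕ) :
    bCoef α (n + 1) / bCoef α n ≤ ((n : ℝ) + 1) ^ (-α) := by
  have hn : (n : ℝ) + 1 ≤ (1 + α) * n + 2 - 1 + α := by nlinarith [hα.1, n.cast_nonneg (α := ℝ)]
  have hΓ : 0 < Gamma ((1 + α) * n + 2 + α) :=
    Gamma_pos_of_pos (by linarith [n.cast_nonneg (α := ℝ)])
  rw [bCoef_succ, mul_div_cancel_left₀ _ (bCoef_pos hα.1.le n).ne', div_le_iff₀ hΓ]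
  calc _ ≤ _ := Gamma_le_Gamma_add_mul_rpow_neg (y := (1 + α) * n + 2) hα
        (by linarith [n.cast_nonneg (α := ℝ)])
    _ ≤ Gamma ((1 + α) * n + 2 + α) * ((n : ℝ) + 1) ^ (-α) :=
      mul_le_mul_of_nonneg_left (rpow_le_rpow_of_nonpos (by positivity) hn (by linarith [hα.1]))
        hΓ.le
    _ = _ := mul_comm _ _

lemma radius_ofScalars_bCoef {α : ℝ} (hα : α ∈ Ioo 0 1) :
    (FormalMultilinearSeries.ofScalars ℝ (bCoef α)).radius = ⊤ := by
  refine FormalMultilinearSeries.ofScalars_radius_eq_top_of_tendsto _ _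
    (.of_forall fun n ↦ (bCoef_pos hα.1.le n).ne') ?_
  have hlim : Tendsto (fun n : ℕ ↦ ((n : ℝ) + 1) ^ (-α)) atTop (𝓝 0) :=
    (tendsto_rpow_neg_atTop hα.1).comp
      (tendsto_atTop_add_const_right _ 1 tendsto_natCast_atTop_atTop)
  refine squeeze_zero (fun n ↦ by positivity) (fun n ↦ ?_) hlim
  rw [Real.norm_of_nonneg (bCoef_pos hα.1.le _).le, Real.norm_of_nonneg (bCoef_pos hα.1.le _).le]
  exact bCoef_succ_div_le hα n

lemma continuous_tsum_bCoef_mul_pow {α : ℝ} (hα : α ∈ Ioo 0 1) :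
    Continuous fun r : ℝ ↦ ∑' n, bCoef α n * r ^ n := by
  have h := (FormalMultilinearSeries.ofScalars ℝ (bCoef α)).hasFPowerSeriesOnBall
    (by simp [radius_ofScalars_bCoef hα]) |>.continuousOn
  rw [radius_ofScalars_bCoef hα, Metric.eball_top, continuousOn_univ,
    ← FormalMultilinearSeries.ofScalarsSum, FormalMultilinearSeries.ofScalarsSum_eq_tsum] at h
  simpa using h

lemma summable_norm_bCoef_mul_pow {α : ℝ} (hα : α ∈ Ioo 0 1) (r : ℝ) :
    Summable fun n ↦ ‖bCoef α n * r ^ n‖ := by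
  simpa [FormalMultilinearSeries.ofScalars_apply_eq, mul_comm] using
    (FormalMultilinearSeries.ofScalars ℝ (bCoef α)).summable_norm_apply (x := r)
      (by simp [radius_ofScalars_bCoef hα])

noncomputable def phiTerm (α : ℝ) (n : ℕ) (x : ℝ) : ℝ := bCoef α n * (-(x ^ (1 + α)) / (1 + α)) ^ n

lemma Phi_eq_tsum (α x : ℝ) : Phi α x = ∑' n, phiTerm α n x := rfl

lemma continuous_phiTerm {α : ℝ} (hα : 0 ≤ α) (n : ℕ) : Continuous (phiTerm α n) := by
  have := continuous_rpow_const (q := 1 + α) (by linarith)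
  unfold phiTerm
  fun_prop

lemma continuous_Phi {α : ℝ} (hα : α ∈ Ioo 0 1) : Continuous (Phi α) :=
  (continuous_tsum_bCoef_mul_pow hα).comp <|
    ((continuous_rpow_const (q := 1 + α) (by linarith [hα.1])).neg).div_const _

lemma Phi_zero {α : ℝ} (hα : 1 + α ≠ 0) : Phi α 0 = 1 := by
  rw [Phi, tsum_eq_single 0 fun n hn ↦ by simp [zero_rpow hα, zero_pow hn]]
  simp [bCoef]

lemma norm_phiTerm {α x : ℝ} (hα : 0 ≤ α) (hx : 0 ≤ x) (n : ℕ) :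
    ‖phiTerm α n x‖ = (-1) ^ n * phiTerm α n x := by
  have h : (-1) ^ n * phiTerm α n x = bCoef α n * (x ^ (1 + α) / (1 + α)) ^ n := by
    rw [phiTerm, mul_left_comm, ← mul_pow]
    ring_nf
  have hb := bCoef_pos hα n
  have hxα : 0 ≤ x ^ (1 + α) := rpow_nonneg hx _
  have hnn : 0 ≤ (-1) ^ n * phiTerm α n x :=
    h ▸ mul_nonneg hb.le (pow_nonneg (div_nonneg hxα (by linarith)) n)
  rw [Real.norm_eq_abs, ← abs_of_nonneg hnn, abs_mul, abs_pow, abs_neg, abs_one, one_pow, one_mul]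

lemma integral_rpow_mul_sub_rpow {p q x : ℝ} (hp : 0 < p) (hq : 0 < q) (hx : 0 < x) :
    ∫ s in (0 : ℝ)..x, s ^ (p - 1) * (x - s) ^ (q - 1) =
      x ^ (p + q - 1) * (Gamma p * Gamma q / Gamma (p + q)) := by
  have hbeta : Complex.betaIntegral p q = ((Gamma p * Gamma q / Gamma (p + q) : ℝ) : ℂ) := by
    rw [Complex.betaIntegral_eq_Gamma_mul_div _ _ (by simpa using hp) (by simpa using hq)]
    simp [← Complex.Gamma_ofReal]
  have hscaled := Complex.betaIntegral_scaled (p : ℂ) (q : ℂ) hx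
  have hintegrand : (∫ s in (0 : ℝ)..x, (s : ℂ) ^ ((p : ℂ) - 1) * ((x : ℂ) - s) ^ ((q : ℂ) - 1)) =
      ((∫ s in (0 : ℝ)..x, s ^ (p - 1) * (x - s) ^ (q - 1) : ℝ) : ℂ) := by
    rw [← intervalIntegral.integral_ofReal, intervalIntegral.integral_of_le hx.le,
      intervalIntegral.integral_of_le hx.le]
    refine setIntegral_congr_fun measurableSet_Ioc fun s hs ↦ ?_
    simp [Complex.ofReal_cpow hs.1.le, Complex.ofReal_cpow (sub_nonneg.2 hs.2)]
  have hpow : (x : ℂ) ^ ((p : ℂ) + q - 1) = ((x ^ (p + q - 1) : ℝ) : ℂ) := by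
    simp [Complex.ofReal_cpow hx.le]
  rw [hintegrand, hpow, hbeta] at hscaled
  exact_mod_cast hscaled

lemma intervalIntegrable_mul_sub_rpow {f : ℝ → ℝ} {a b x q : ℝ} (hq : -1 < q)
    (hf : ContinuousOn f (uIcc a b)) :
    IntervalIntegrable (fun s ↦ f s * (x - s) ^ q) volume a b := by
  have h := (intervalIntegral.intervalIntegrable_rpow' (a := x - b) (b := x - a) hq).comp_sub_left x
  simp only [sub_sub_cancel] at h
  exact (h.continuousOn_mul (uIcc_comm a b ▸ hf)).symm

lemma mul_phiTerm {α s : ℝ} (hα : 0 ≤ α) (hs : 0 ≤ s) (n : ℕ) :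
    s * phiTerm α n s = bCoef α n * (-1 / (1 + α)) ^ n * s ^ ((1 + α) * n + 2 - 1) := by
  have hpow : s ^ ((1 + α) * n + 2 - 1) = (s ^ (1 + α)) ^ n * s := by
    rw [show (1 + α) * n + 2 - 1 = (1 + α) * n + 1 by ring, rpow_add_one' hs (by positivity),
      rpow_mul hs, rpow_natCast]
  rw [hpow, phiTerm, show -s ^ (1 + α) / (1 + α) = -1 / (1 + α) * s ^ (1 + α) by ring, mul_pow]
  ring

lemma integral_mul_phiTerm {α x : ℝ} (hα : 0 < α) (hx : 0 < x) (n : ℕ) :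
    ∫ s in (0 : ℝ)..x, s * phiTerm α n s * (x - s) ^ (α - 1) =
      -(Gamma α * (1 + α)) * phiTerm α (n + 1) x := by
  have hbeta := integral_rpow_mul_sub_rpow (p := (1 + α) * n + 2) (by positivity) hα hx
  have hxpow : x ^ ((1 + α) * n + 2 + α - 1) = (x ^ (1 + α)) ^ (n + 1) := by
    rw [← rpow_natCast, ← rpow_mul hx.le]
    push_cast
    ring_nf
  calc ∫ s in (0 : ℝ)..x, s * phiTerm α n s * (x - s) ^ (α - 1)
      = ∫ s in (0 : ℝ)..x, bCoef α n * (-1 / (1 + α)) ^ n *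
          (s ^ ((1 + α) * n + 2 - 1) * (x - s) ^ (α - 1)) := by
        refine intervalIntegral.integral_congr fun s hs ↦ ?_
        rw [uIcc_of_le hx.le] at hs
        simp only [mul_phiTerm hα.le hs.1, mul_assoc]
    _ = -(Gamma α * (1 + α)) * phiTerm α (n + 1) x := by
        have hc : 1 + α ≠ 0 := by positivity
        rw [intervalIntegral.integral_const_mul, hbeta, hxpow, phiTerm, bCoef_succ,
          show -x ^ (1 + α) / (1 + α) = -1 / (1 + α) * x ^ (1 + α) by ring, mul_pow,
          pow_succ (-1 / (1 + α))]
        field_simp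

lemma integral_mul_Phi_mul_rpow {α x : ℝ} (hα : α ∈ Ioo 0 1) (hx : 0 ≤ x) :
    ∫ s in (0 : ℝ)..x, s * Phi α s * (x - s) ^ (α - 1) = Gamma α * (1 + α) * (1 - Phi α x) := by
  rcases hx.eq_or_lt with rfl | hx
  · simp [Phi_zero (by linarith [hα.1] : 1 + α ≠ 0)]
  set F : ℕ → ℝ → ℝ := fun n s ↦ s * phiTerm α n s * (x - s) ^ (α - 1)
  have hF_int (n : ℕ) : IntegrableOn (F n) (Ioc 0 x) := by
    refine (intervalIntegrable_iff_integrableOn_Ioc_of_le hx.le).1 ?_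
    exact intervalIntegrable_mul_sub_rpow (by linarith [hα.1])
      (continuous_id.mul (continuous_phiTerm hα.1.le n)).continuousOn
  have hF_norm (n : ℕ) :
      ∫ s in Ioc 0 x, ‖F n s‖ = Gamma α * (1 + α) * ‖phiTerm α (n + 1) x‖ := by
    have hsign : ∀ s ∈ Ioc 0 x, ‖F n s‖ = (-1) ^ n * F n s := fun s hs ↦ by
      rw [norm_mul, norm_mul, norm_phiTerm hα.1.le hs.1.le, Real.norm_of_nonneg hs.1.le,
        Real.norm_of_nonneg (rpow_nonneg (sub_nonneg.2 hs.2) _)]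
      ring
    rw [setIntegral_congr_fun measurableSet_Ioc hsign, integral_const_mul,
      ← intervalIntegral.integral_of_le hx.le, integral_mul_phiTerm hα.1 hx,
      norm_phiTerm hα.1.le hx.le, pow_succ]
    ring
  have hsummable : Summable fun n ↦ ∫ s in Ioc 0 x, ‖F n s‖ := by
    simp_rw [hF_norm]
    exact ((summable_nat_add_iff 1).2 (summable_norm_bCoef_mul_pow hα _)).mul_left _
  calc ∫ s in (0 : ℝ)..x, s * Phi α s * (x - s) ^ (α - 1)
      = ∫ s in Ioc 0 x, ∑' n, F n s := by
        rw [intervalIntegral.integral_of_le hx.le]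
        congr 1 with s
        simp only [F, Phi_eq_tsum, tsum_mul_left, tsum_mul_right]
    _ = ∑' n, ∫ s in Ioc 0 x, F n s :=
        (integral_tsum_of_summable_integral_norm hF_int hsummable).symm
    _ = ∑' n, -(Gamma α * (1 + α)) * phiTerm α (n + 1) x := by
        congr 1 with n
        rw [← intervalIntegral.integral_of_le hx.le, integral_mul_phiTerm hα.1 hx]
    _ = Gamma α * (1 + α) * (1 - Phi α x) := by
        rw [tsum_mul_left, Phi_eq_tsum, Summable.tsum_eq_zero_add (f := fun n ↦ phiTerm α n x)
          (summable_norm_bCoef_mul_pow hα _).of_norm]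
        simp [phiTerm, bCoef]

lemma exists_pos_add_mul_rpow_le {y α ε : ℝ} (hα : 0 < α) (hε : 0 < ε) :
    ∃ δ > 0, (y + δ) * δ ^ α ≤ ε := by
  have hcont : ContinuousAt (fun δ : ℝ ↦ (y + δ) * δ ^ α) 0 :=
    (continuousAt_const.add continuousAt_id).mul (continuousAt_rpow_const _ _ (Or.inr hα.le))
  have hlim : ∀ᶠ δ in 𝓝 (0 : ℝ), (y + δ) * δ ^ α < ε := by
    refine hcont.eventually (gt_mem_nhds ?_)
    simpa [zero_rpow hα.ne'] using hε
  obtain ⟨δ, hδ, hδpos⟩ := ((hlim.filter_mono nhdsWithin_le_nhds).and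
    (self_mem_nhdsWithin : Ioi (0 : ℝ) ∈ 𝓝[>] 0)).exists
  exact ⟨δ, hδpos, hδ.le⟩

lemma exists_nonneg_forall_Ioc_neg {f : ℝ → ℝ} {a b : ℝ} (hf : ContinuousOn f (Icc a b))
    (hab : a ≤ b) (ha : 0 ≤ f a) : ∃ T ∈ Icc a b, 0 ≤ f T ∧ ∀ s ∈ Ioc T b, f s < 0 := by
  set S := Icc a b ∩ f ⁻¹' Ici 0
  have hS : IsClosed S := hf.preimage_isClosed_of_isClosed isClosed_Icc isClosed_Ici
  have hbdd : BddAbove S := ⟨b, fun s hs ↦ hs.1.2⟩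
  obtain ⟨hT, hfT⟩ := hS.csSup_mem ⟨a, ⟨le_rfl, hab⟩, ha⟩ hbdd
  refine ⟨sSup S, hT, hfT, fun s hs ↦ ?_⟩
  by_contra! hfs
  exact (le_csSup hbdd ⟨⟨hT.1.trans hs.1.le, hs.2⟩, hfs⟩).not_gt hs.1

section Kernel

variable {α : ℝ} {f : ℝ → ℝ}

lemma integral_mul_rpow_le_add_integral_negPart (hf : Continuous f) (hα₀ : 0 < α) (hα₁ : α ≤ 1)
    {T y : ℝ} (hT : 0 ≤ T) (hTy : T ≤ y) (hneg : ∀ s ∈ Ioc T y, f s ≤ 0) :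
    ∫ s in (0 : ℝ)..y, s * f s * (y - s) ^ (α - 1) ≤
      (∫ s in (0 : ℝ)..T, s * f s * (T - s) ^ (α - 1)) +
        ∫ s in (0 : ℝ)..T, s * (f s)⁻ * (T - s) ^ (α - 1) := by
  have hq : -1 < α - 1 := by linarith
  have hint (g : ℝ → ℝ) (hg : Continuous g) (z a b : ℝ) :
      IntervalIntegrable (fun s ↦ s * g s * (z - s) ^ (α - 1)) volume a b :=
    intervalIntegrable_mul_sub_rpow hq (continuous_id.mul hg).continuousOn
  have hf' : Continuous fun s ↦ (f s)⁻ := hf.neg.sup continuous_const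
  have htail : ∫ s in T..y, s * f s * (y - s) ^ (α - 1) ≤ 0 := by
    rw [intervalIntegral.integral_of_le hTy]
    refine setIntegral_nonpos measurableSet_Ioc fun s hs ↦ ?_
    exact mul_nonpos_of_nonpos_of_nonneg (mul_nonpos_of_nonneg_of_nonpos (hT.trans hs.1.le)
      (hneg s hs)) (rpow_nonneg (sub_nonneg.2 hs.2) _)
  have hhead : ∫ s in (0 : ℝ)..T, s * f s * (y - s) ^ (α - 1) ≤
      ∫ s in (0 : ℝ)..T, (s * f s * (T - s) ^ (α - 1) + s * (f s)⁻ * (T - s) ^ (α - 1)) := by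
    refine intervalIntegral.integral_mono_on_of_le_Ioo hT (hint f hf y 0 T)
      ((hint f hf T 0 T).add (hint _ hf' T 0 T)) fun s hs ↦ ?_
    rcases le_or_gt 0 (f s) with hfs | hfs
    · rw [negPart_eq_zero.2 hfs, mul_zero, zero_mul, add_zero]
      exact mul_le_mul_of_nonneg_left
        (rpow_le_rpow_of_nonpos (by linarith [hs.2]) (by linarith) (by linarith))
        (mul_nonneg hs.1.le hfs)
    · rw [negPart_eq_neg.2 hfs.le, ← add_mul, mul_neg, add_neg_cancel, zero_mul]
      exact mul_nonpos_of_nonpos_of_nonneg (mul_nonpos_of_nonneg_of_nonpos hs.1.le hfs.le)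
        (rpow_nonneg (by linarith [hs.2]) _)
  rw [intervalIntegral.integral_add (hint f hf T 0 T) (hint _ hf' T 0 T)] at hhead
  rw [← intervalIntegral.integral_add_adjacent_intervals (hint f hf y 0 T) (hint f hf y T y)]
  linarith

lemma integral_mul_negPart_mul_rpow_le (hf : Continuous f) (hα : 0 < α) {a T M : ℝ} (ha : 0 ≤ a)
    (haT : a ≤ T) (hM : 0 ≤ M) (hf₀ : ∀ s ∈ Icc 0 a, 0 ≤ f s) (hfM : ∀ s ∈ Icc a T, -M ≤ f s) :
    ∫ s in (0 : ℝ)..T, s * (f s)⁻ * (T - s) ^ (α - 1) ≤ T * M * (T - a) ^ α / α := by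
  have hq : -1 < α - 1 := by linarith
  have hint (g : ℝ → ℝ) (hg : Continuous g) (a b : ℝ) :
      IntervalIntegrable (fun s ↦ g s * (T - s) ^ (α - 1)) volume a b :=
    intervalIntegrable_mul_sub_rpow hq hg.continuousOn
  have hneg : Continuous fun s ↦ s * (f s)⁻ := continuous_id.mul (hf.neg.sup continuous_const)
  have hhead : ∫ s in (0 : ℝ)..a, s * (f s)⁻ * (T - s) ^ (α - 1) = 0 := by
    have hzero : EqOn (fun s ↦ s * (f s)⁻ * (T - s) ^ (α - 1)) 0 (uIcc 0 a) := by
      intro s hs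
      rw [uIcc_of_le ha] at hs
      simp [negPart_eq_zero.2 (hf₀ s hs)]
    simp [intervalIntegral.integral_congr hzero]
  have hkernel : ∫ s in a..T, (T - s) ^ (α - 1) = (T - a) ^ α / α := by
    rw [intervalIntegral.integral_comp_sub_left (fun u ↦ u ^ (α - 1)), sub_self,
      integral_rpow (Or.inl hq), zero_rpow (by linarith), sub_add_cancel, sub_zero]
  have htail : ∫ s in a..T, s * (f s)⁻ * (T - s) ^ (α - 1) ≤
      ∫ s in a..T, T * M * (T - s) ^ (α - 1) := by
    refine intervalIntegral.integral_mono_on_of_le_Ioo haT (hint _ hneg a T)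
      (hint _ continuous_const a T) fun s hs ↦ ?_
    refine mul_le_mul_of_nonneg_right ?_ (rpow_nonneg (by linarith [hs.2]) _)
    exact mul_le_mul hs.2.le (sup_le (by linarith [hfM s (Ioo_subset_Icc_self hs)]) hM)
      (negPart_nonneg _) (by linarith [hs.1])
  rw [intervalIntegral.integral_const_mul, hkernel] at htail
  rw [← intervalIntegral.integral_add_adjacent_intervals (hint _ hneg 0 a) (hint _ hneg a T), hhead,
    zero_add]
  exact htail.trans_eq (mul_div_assoc _ _ _).symm

end Kernel

lemma exists_pos_forall_Icc_Phi_nonneg {α y : ℝ} (hα : α ∈ Ioo 0 1) (hy : 0 ≤ y)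
    (hΦ : ∀ t ∈ Icc 0 y, 0 ≤ Phi α t) : ∃ δ > 0, ∀ t ∈ Icc 0 (y + δ), 0 ≤ Phi α t := by
  have hcont := continuous_Phi hα
  set K := Gamma α * (1 + α)
  have hK : 0 < K := mul_pos (Gamma_pos_of_pos hα.1) (by linarith [hα.1])
  obtain ⟨δ, hδ, hδK⟩ :=
    exists_pos_add_mul_rpow_le (y := y) hα.1 (div_pos (mul_pos hα.1 hK) two_pos)
  refine ⟨δ, hδ, ?_⟩
  by_contra! ⟨t, ht, hΦt⟩
  have hyt : y < t := by
    by_contra! hty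
    exact (hΦ t ⟨ht.1, hty⟩).not_gt hΦt
  obtain ⟨x₀, hx₀, hmin⟩ := isCompact_Icc.exists_isMinOn
    (nonempty_Icc.2 (by linarith : y ≤ y + δ)) hcont.continuousOn
  set M := -Phi α x₀
  have hM : 0 < M := by linarith [isMinOn_iff.1 hmin t ⟨hyt.le, ht.2⟩]
  obtain ⟨T, hT, hΦT, hnegT⟩ := exists_nonneg_forall_Ioc_neg hcont.continuousOn hx₀.1
    (hΦ y ⟨hy, le_rfl⟩)
  have hsplit := integral_mul_rpow_le_add_integral_negPart hcont hα.1 hα.2.le (hy.trans hT.1)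
    hT.2 fun s hs ↦ (hnegT s hs).le
  have hnegPart := integral_mul_negPart_mul_rpow_le (a := y) (M := M) hcont hα.1 hy hT.1 hM.le
    hΦ fun s hs ↦ (neg_neg _).trans_le <|
      isMinOn_iff.1 hmin s ⟨hs.1, hs.2.trans (hT.2.trans hx₀.2)⟩
  have hsmall : T * M * (T - y) ^ α / α ≤ M * K / 2 := by
    have : T * (T - y) ^ α ≤ α * K / 2 :=
      (mul_le_mul (by linarith [hT.2, hx₀.2])
        (rpow_le_rpow (by linarith [hT.1]) (by linarith [hT.2, hx₀.2]) hα.1.le)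
        (rpow_nonneg (by linarith [hT.1]) _) (by linarith)).trans hδK
    rw [div_le_iff₀ hα.1]
    nlinarith
  rw [integral_mul_Phi_mul_rpow hα (hy.trans hx₀.1),
    integral_mul_Phi_mul_rpow hα (hy.trans hT.1)] at hsplit
  nlinarith [mul_pos hK hM, mul_nonneg hK.le hΦT]

theorem Phi_nonneg {α x : ℝ} (hα : α ∈ Ioo 0 1) (hx : 0 ≤ x) : 0 ≤ Phi α x := by
  set S := {y | ∀ t, 0 ≤ t → Phi α t < 0 → y ≤ t}
  have hS : IsClosed S := by
    simp only [S, ofPred_forall]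
    exact isClosed_iInter fun t ↦ isClosed_iInter fun _ ↦ isClosed_iInter fun _ ↦ isClosed_Iic
  have hstep : ∀ y ∈ S ∩ Ico 0 (x + 1), S ∈ 𝓝[>] y := by
    rintro y ⟨hyS, hy, -⟩
    have hIco : ∀ t ∈ Ico 0 y, 0 ≤ Phi α t := fun t ht ↦
      not_lt.1 fun hΦt ↦ (hyS t ht.1 hΦt).not_gt ht.2
    have hΦy : 0 ≤ Phi α y := by
      rcases hy.eq_or_lt with rfl | hy
      · simp [Phi_zero (by linarith [hα.1] : 1 + α ≠ 0)]
      · exact closure_minimal hIco (isClosed_le continuous_const (continuous_Phi hα))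
          (closure_Ico hy.ne ▸ right_mem_Icc.2 hy.le)
    obtain ⟨δ, hδ, hδΦ⟩ := exists_pos_forall_Icc_Phi_nonneg hα hy fun t ht ↦
      ht.2.eq_or_lt.elim (· ▸ hΦy) (hIco t ⟨ht.1, ·⟩)
    filter_upwards [Ioo_mem_nhdsGT (lt_add_of_pos_right y hδ)] with z hz t ht hΦt
    by_contra! htz
    exact (hδΦ t ⟨ht, by linarith [hz.2]⟩).not_gt hΦt
  have hsub := (hS.inter isClosed_Icc).Icc_subset_of_forall_mem_nhdsWithin
    (fun _ ht _ ↦ ht) hstep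
  by_contra! hΦx
  exact (hsub ⟨by linarith, le_rfl⟩ x hx hΦx).not_gt (by linarith)

/-- The integral identity `Φ(x) = 1 − (1/(Γ(α)(1+α))) ∫₀ˣ sΦ(s)(x−s)^{α−1} ds`, together with
`Φ(x) ≥ 0` and `∫₀ˣ sΦ(s)(x−s)^{α−1} ds ≤ Γ(α)(1+α)`. -/
theorem stmt2 (α : ℝ) (hα : α ∈ Set.Ioo (0:ℝ) 1) (x : ℝ) (hx : 0 < x) :
    Phi α x = 1 - (1 / (Real.Gamma α * (1 + α))) *
        ∫ s in (0:ℝ)..x, s * Phi α s * (x - s) ^ (α - 1) ∧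
      0 ≤ Phi α x ∧
      (∫ s in (0:ℝ)..x, s * Phi α s * (x - s) ^ (α - 1)) ≤ Real.Gamma α * (1 + α) := by
  have hK : 0 < Gamma α * (1 + α) := mul_pos (Gamma_pos_of_pos hα.1) (by linarith [hα.1])
  have hΦ := Phi_nonneg hα hx.le
  rw [integral_mul_Phi_mul_rpow hα hx.le]
  refine ⟨by rw [one_div, ← mul_assoc, inv_mul_cancel₀ hK.ne', one_mul]; ring, hΦ, by nlinarith⟩
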